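/- arXiv:1903.05282 — 3 statements merged into one kernel-verified Lean document; each statement's English description precedes it below -/
import Mathlib

section
/- If a nonnegative real sequence (u_k) satisfies ∑_{k=0}^∞ u_k < ∞, then liminf_{k→∞} k·log(k)·u_k = 0. -/
/-!
Since `log (log (x + 1)) - log (log x) ≤ 1 / (x log x)` and `log ∘ log → ∞`, the series
`∑ 1 / (k log k)` diverges. If `k log k u_k ≥ a > 0` held eventually, then `∑ u_k` would dominate
`a ∑ 1 / (k log k)`; so every eventual lower bound of the nonnegative sequence `k log k u_k` is
at most `0`, i.e. its liminf is `0`.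
-/

open Filter Real

lemma Real.log_sub_log_le_div {x y : ℝ} (hx : 0 < x) (hy : 0 < y) :
    log y - log x ≤ (y - x) / x := by
  rw [← log_div hy.ne' hx.ne', sub_div, div_self hx.ne']
  exact log_le_sub_one_of_pos (div_pos hy hx)

lemma Real.log_log_add_one_sub_log_log_le {x : ℝ} (hx : 1 < x) :
    log (log (x + 1)) - log (log x) ≤ 1 / (x * log x) := by
  have hx0 : 0 < x := by linarith
  have hlog : 0 < log x := log_pos hx
  have hlog_succ : 0 < log (x + 1) := log_pos (by linarith)
  calc log (log (x + 1)) - log (log x) ≤ (log (x + 1) - log x) / log x :=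
        log_sub_log_le_div hlog hlog_succ
    _ ≤ (1 / x) / log x := by
        gcongr
        simpa using log_sub_log_le_div hx0 (by linarith : 0 < x + 1)
    _ = 1 / (x * log x) := by rw [div_div]

lemma not_summable_sub_of_tendsto_atTop {g : ℕ → ℝ} (hg : Tendsto g atTop atTop) :
    ¬ Summable (fun n => g (n + 1) - g n) := by
  intro h
  have hpartial := h.hasSum.tendsto_sum_nat
  simp only [Finset.sum_range_sub] at hpartial
  exact not_tendsto_atTop_of_tendsto_nhds (by simpa using hpartial.add_const (g 0)) hg

lemma Real.not_summable_one_div_natCast_mul_log :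
    ¬ Summable (fun n : ℕ => 1 / (n * log n)) := by
  intro h
  have hloglog : Tendsto (fun n : ℕ => log (log n)) atTop atTop :=
    (tendsto_log_atTop.comp tendsto_log_atTop).comp tendsto_natCast_atTop_atTop
  refine not_summable_sub_of_tendsto_atTop hloglog (h.of_norm_bounded_eventually_nat ?_)
  filter_upwards [eventually_ge_atTop 2] with n hn
  have hn' : (2 : ℝ) ≤ n := by exact_mod_cast hn
  have hlog : 0 < log n := log_pos (by linarith)
  have hmono : log (log n) ≤ log (log (n + 1)) :=
    log_le_log hlog (log_le_log (by linarith) (by linarith))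
  rw [Real.norm_of_nonneg (sub_nonneg.2 (by exact_mod_cast hmono))]
  exact_mod_cast log_log_add_one_sub_log_log_le (by linarith : (1 : ℝ) < n)

lemma Summable.not_eventually_le_natCast_mul_log_mul {u : ℕ → ℝ} (hsum : Summable u)
    {a : ℝ} (ha : 0 < a) : ¬ ∀ᶠ k : ℕ in atTop, a ≤ k * log k * u k := by
  intro h
  refine not_summable_one_div_natCast_mul_log
    ((hsum.mul_left a⁻¹).of_norm_bounded_eventually_nat ?_)
  filter_upwards [h, eventually_ge_atTop 2] with k hk hk2
  have hk2' : (2 : ℝ) ≤ k := by exact_mod_cast hk2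
  have hpos : 0 < (k : ℝ) * log k := mul_pos (by linarith) (log_pos (by linarith))
  rw [Real.norm_of_nonneg (by positivity), div_le_iff₀ hpos, mul_assoc, le_inv_mul_iff₀ ha,
    mul_one, mul_comm]
  exact hk

/-- If a nonnegative real sequence `(u k)` has a convergent series, then
`liminf_{k→∞} k·log(k)·u_k = 0`. -/
theorem stmt0 (u : ℕ → ℝ) (hu : ∀ k, 0 ≤ u k) (hsum : Summable u) :
    Filter.liminf (fun k : ℕ => (k : ℝ) * Real.log k * u k) Filter.atTop = 0 := by
  have hlower : {a : ℝ | ∀ᶠ k : ℕ in atTop, a ≤ k * log k * u k} = Set.Iic 0 := by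
    ext a
    refine ⟨fun h => not_lt.1 fun ha => hsum.not_eventually_le_natCast_mul_log_mul ha h,
      fun ha => Eventually.of_forall fun k => ?_⟩
    exact (Set.mem_Iic.1 ha).trans <|
      mul_nonneg (mul_nonneg k.cast_nonneg (log_natCast_nonneg k)) (hu k)
  rw [liminf_eq, hlower, csSup_Iic]
end

section
/- Define τ₀ := 1 and τ_{k+1} := (τ_k/2)(√(τ_k² + 4) − τ_k) for k ≥ 0. Then for every k ≥ 0, τ_k ∈ (0,1], 1 − τ_{k+1} = τ_{k+1}²/τ_k², and τ_k ≤ 2/(k+2). -/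
lemma stmt6_key (τ : ℝ) (hτ : 0 < τ) :
    0 < (τ/2) * (Real.sqrt (τ^2+4) - τ) ∧
    ((τ/2) * (Real.sqrt (τ^2+4) - τ))^2 = τ^2 * (1 - (τ/2) * (Real.sqrt (τ^2+4) - τ)) ∧
    (τ/2) * (Real.sqrt (τ^2+4) - τ) < τ ∧
    ((τ/2) * (Real.sqrt (τ^2+4) - τ)) * (2 + τ) ≤ 2 * τ := by
  set s := Real.sqrt (τ^2+4) with hs
  have hs2 : s^2 = τ^2 + 4 := Real.sq_sqrt (by positivity)
  have hsnn : 0 ≤ s := Real.sqrt_nonneg _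
  have hst : τ < s := by nlinarith
  have ht : 0 < (τ/2) * (s - τ) := by nlinarith
  have heq : ((τ/2) * (s - τ))^2 = τ^2 * (1 - (τ/2) * (s - τ)) := by nlinarith
  have hlt : (τ/2) * (s - τ) < τ := by nlinarith
  refine ⟨ht, heq, hlt, ?_⟩
  nlinarith [mul_pos ht (show (0:ℝ) < τ + (τ/2) * (s - τ) by linarith)]

/-- For the sequence `τ₀ = 1`, `τ_{k+1} = (τ_k/2)(√(τ_k² + 4) − τ_k)`, one has for every `k`:
`τ_k ∈ (0,1]`, `1 − τ_{k+1} = τ_{k+1}²/τ_k²`, and `τ_k ≤ 2/(k+2)`. -/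
theorem stmt6 (τ : ℕ → ℝ) (hτ0 : τ 0 = 1)
    (hrec : ∀ k, τ (k + 1) = (τ k / 2) * (Real.sqrt (τ k ^ 2 + 4) - τ k)) :
    ∀ k, (0 < τ k ∧ τ k ≤ 1) ∧ 1 - τ (k + 1) = τ (k + 1) ^ 2 / τ k ^ 2 ∧
      τ k ≤ 2 / ((k : ℝ) + 2) := by
  have main : ∀ k, 0 < τ k ∧ τ k ≤ 2 / ((k : ℝ) + 2) := by
    intro k
    induction k with
    | zero => constructor <;> simp [hτ0] <;> norm_num
    | succ n ih =>
      obtain ⟨hpos, hbd⟩ := ih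
      obtain ⟨ht, heq, hlt, hineq⟩ := stmt6_key (τ n) hpos
      rw [← hrec n] at ht hineq hlt
      refine ⟨ht, ?_⟩
      have hk : (0:ℝ) ≤ (n:ℝ) := Nat.cast_nonneg n
      have h2 : τ n * ((n:ℝ) + 2) ≤ 2 := by
        rw [div_eq_mul_inv] at hbd
        have : (0:ℝ) < (n:ℝ) + 2 := by linarith
        calc τ n * ((n:ℝ) + 2) ≤ (2 * ((n:ℝ)+2)⁻¹) * ((n:ℝ)+2) := by
              apply mul_le_mul_of_nonneg_right hbd (le_of_lt this)
          _ = 2 := by field_simp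
      have h3 : (0:ℝ) < ((n:ℕ) + 1 : ℕ) + 2 := by push_cast; linarith
      rw [le_div_iff₀ (by push_cast; linarith)]
      push_cast
      nlinarith [mul_le_mul_of_nonneg_right hineq (show (0:ℝ) ≤ (n:ℝ) + 3 by linarith),
        mul_le_mul_of_nonneg_right h2 (show (0:ℝ) ≤ 2 by norm_num)]
  intro k
  obtain ⟨hpos, hbd⟩ := main k
  have hle1 : τ k ≤ 1 := by
    have : 2 / ((k:ℝ) + 2) ≤ 1 := by
      rw [div_le_one (by positivity)]
      have : (0:ℝ) ≤ (k:ℝ) := Nat.cast_nonneg k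
      linarith
    linarith
  obtain ⟨ht, heq, hlt, hineq⟩ := stmt6_key (τ k) hpos
  rw [← hrec k] at heq
  refine ⟨⟨hpos, hle1⟩, ?_, hbd⟩
  field_simp
  nlinarith [heq]
end

section
/- Telescoping rate bound: suppose nonnegative sequences (G_k), (a_k), (b_k) and a constant c > 1 satisfy, for all k ≥ 0, (k+c)·G_{k+1} + ((k+c)²/c)·a_{k+1}² + c·b_{k+1}² ≤ (k+c−1)·G_k + ((k+c−1)²/c)·a_k² + c·b_k². Then for all k ≥ 0, G_k ≤ [(c−1)G₀ + ((c−1)²/c)a₀² + c·b₀²]/(k+c−1). -/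
/-- Telescoping rate bound: if nonnegative sequences `(G_k), (a_k), (b_k)` and `c > 1` satisfy
`(k+c)G_{k+1} + ((k+c)²/c)a_{k+1}² + c b_{k+1}² ≤ (k+c−1)G_k + ((k+c−1)²/c)a_k² + c b_k²`
for all `k`, then `G_k ≤ [(c−1)G₀ + ((c−1)²/c)a₀² + c b₀²]/(k+c−1)` for all `k`. -/
theorem stmt12 (G a b : ℕ → ℝ) (hG : ∀ k, 0 ≤ G k) (ha : ∀ k, 0 ≤ a k) (hb : ∀ k, 0 ≤ b k)
    (c : ℝ) (hc : 1 < c)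
    (hstep : ∀ k : ℕ, ((k : ℝ) + c) * G (k + 1) + (((k : ℝ) + c) ^ 2 / c) * a (k + 1) ^ 2
        + c * b (k + 1) ^ 2
      ≤ ((k : ℝ) + c - 1) * G k + (((k : ℝ) + c - 1) ^ 2 / c) * a k ^ 2 + c * b k ^ 2) :
    ∀ k : ℕ, G k ≤ ((c - 1) * G 0 + ((c - 1) ^ 2 / c) * a 0 ^ 2 + c * b 0 ^ 2)
        / ((k : ℝ) + c - 1) := by
  have hc0 : (0 : ℝ) < c := lt_trans one_pos hc
  set E : ℕ → ℝ := fun k => ((k : ℝ) + c - 1) * G k + (((k : ℝ) + c - 1) ^ 2 / c) * a k ^ 2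
      + c * b k ^ 2 with hE
  have hEmono : ∀ k, E (k + 1) ≤ E k := by
    intro k
    have := hstep k
    simp only [hE]
    push_cast
    ring_nf
    ring_nf at this
    linarith
  have hE0 : ∀ k, E k ≤ E 0 := by
    intro k
    induction k with
    | zero => exact le_refl _
    | succ n ih => exact le_trans (hEmono n) ih
  intro k
  have hpos : (0 : ℝ) < (k : ℝ) + c - 1 := by
    have : (0 : ℝ) ≤ (k : ℝ) := Nat.cast_nonneg k
    linarith
  rw [le_div_iff₀ hpos]
  have h1 : G k * ((k : ℝ) + c - 1) ≤ E k := by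
    have h2 : 0 ≤ (((k : ℝ) + c - 1) ^ 2 / c) * a k ^ 2 :=
      mul_nonneg (div_nonneg (sq_nonneg _) hc0.le) (sq_nonneg _)
    have h3 : 0 ≤ c * b k ^ 2 := mul_nonneg hc0.le (sq_nonneg _)
    simp only [hE]
    nlinarith
  have h4 : E 0 = (c - 1) * G 0 + ((c - 1) ^ 2 / c) * a 0 ^ 2 + c * b 0 ^ 2 := by
    simp [hE]
  calc G k * ((k : ℝ) + c - 1) ≤ E k := h1
    _ ≤ E 0 := hE0 k
    _ = _ := h4
end
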